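/- Let 𝓛 ⊆ ℝ^d be a full-rank lattice with fundamental domain Γ, let ħ > 0, q, p ∈ ℝ^d, and let ψ : ℝ^d → ℂ be measurable, 𝓛-periodic with ∫_Γ |ψ| < ∞. Then the function y ↦ conj(|q,p⟩(y)) ψ(y) is integrable on ℝ^d and ∫_{ℝ^d} conj(|q,p⟩(y)) ψ(y) dy = ∫_Γ conj(Σ_{ℓ ∈ 𝓛} |q,p⟩(y + ℓ)) ψ(y) dy, where |q,p⟩(y) = (πħ)^{−d/4} exp(−|y − q|²/(2ħ)) exp(i p·y/ħ). -/

import Mathlib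

open MeasureTheory

noncomputable section

/-- A set `L ⊆ ℝ^d` is a full-rank lattice if it is the ℤ-span of an ℝ-basis. -/
def IsFullRankLattice {d : ℕ} (L : Set (EuclideanSpace ℝ (Fin d))) : Prop :=
  ∃ a : Module.Basis (Fin d) ℝ (EuclideanSpace ℝ (Fin d)),
    L = {z | ∃ n : Fin d → ℤ, z = ∑ i, (n i : ℝ) • a i}

/-- `Γ` is a measurable fundamental domain for the lattice `L`: almost every point of
`ℝ^d` has a unique translate by `L` lying in `Γ`. -/
def IsFundDomain {d : ℕ} (L Γ : Set (EuclideanSpace ℝ (Fin d))) : Prop :=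
  MeasurableSet Γ ∧
    ∀ᵐ x : EuclideanSpace ℝ (Fin d) ∂volume, ∃! ℓ, ℓ ∈ L ∧ x - ℓ ∈ Γ

/-- The Schrödinger coherent state
`|q,p⟩(y) = (πħ)^(−d/4) exp(−|y − q|²/(2ħ)) exp(i p·y/ħ)`. -/
def coherentState (d : ℕ) (hbar : ℝ) (q p y : EuclideanSpace ℝ (Fin d)) : ℂ :=
  (((Real.pi * hbar) ^ (-(d : ℝ) / 4) : ℝ) : ℂ) *
    Complex.exp (((-‖y - q‖ ^ 2 / (2 * hbar) : ℝ)) : ℂ) *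
    Complex.exp (Complex.I * ((inner ℝ p y : ℝ) : ℂ) / (hbar : ℂ))

/-!
Tiling `ℝ^d` by the translates `ℓ + Γ` turns the integral over `ℝ^d` into `∑_ℓ ∫_Γ`, and the
periodicity of `ψ` moves every translation onto the coherent state; pulling the sum back inside
the integral gives the periodized state. Both interchanges are justified by the uniform bound
`sup_y ∑_ℓ |⟨q,p⟩(y + ℓ)| < ∞`: the Gaussian is dominated by `e^{ħ/2} e^{-|y - q|}`, the sum
`∑_ℓ e^{-|ℓ|}` converges on any lattice, and a lattice translation brings `y - q` into a bounded
fundamental parallelepiped.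
-/

open scoped ENNReal

theorem Real.exp_neg_norm_add_le {E : Type*} [SeminormedAddCommGroup E] (x v : E) :
    Real.exp (-‖x + v‖) ≤ Real.exp ‖v‖ * Real.exp (-‖x‖) := by
  rw [← Real.exp_add, Real.exp_le_exp]
  have := norm_sub_le (x + v) v
  rw [add_sub_cancel_right] at this
  linarith

theorem Real.exp_neg_sq_div_le {hbar : ℝ} (hhbar : 0 < hbar) (t : ℝ) :
    Real.exp (-t ^ 2 / (2 * hbar)) ≤ Real.exp (hbar / 2) * Real.exp (-t) := by
  rw [← Real.exp_add, Real.exp_le_exp, div_le_iff₀ (by positivity)]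
  nlinarith [sq_nonneg (t - hbar)]

theorem MeasureTheory.IsAddFundamentalDomain.of_ae_existsUnique {G α : Type*} [AddGroup G]
    [AddAction G α] [MeasurableSpace α] {s : Set α} {μ : Measure α} (h_meas : NullMeasurableSet s μ)
    (h_unique : ∀ᵐ x ∂μ, ∃! g : G, g +ᵥ x ∈ s) : IsAddFundamentalDomain G s μ where
  nullMeasurableSet := h_meas
  ae_covers := h_unique.mono fun _ hx => hx.exists
  aedisjoint g g' hne := by
    refine measure_mono_null ?_ (ae_iff.1 h_unique)
    rintro x ⟨hxg, hxg'⟩ hx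
    simp only [Set.mem_vadd_set_iff_neg_vadd_mem] at hxg hxg'
    exact hne (neg_injective (hx.unique hxg hxg'))

theorem AddSubgroup.apply_vadd_mul_apply_vadd {E 𝕜 : Type*} [AddCommGroup E] [Mul 𝕜]
    {Λ : AddSubgroup E} {g ψ : E → 𝕜} (hψper : ∀ y, ∀ ℓ ∈ Λ, ψ (y + ℓ) = ψ y) (ℓ : Λ) (y : E) :
    g (ℓ +ᵥ y) * ψ (ℓ +ᵥ y) = g (y + ℓ) * ψ y := by
  rw [AddSubgroup.vadd_def, vadd_eq_add, add_comm, hψper y ℓ ℓ.2]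

section Unfolding

variable {E 𝕜 : Type*} [AddCommGroup E] [MeasurableSpace E] [MeasurableAdd E] {μ : Measure E}
  {Λ : AddSubgroup E} [Countable Λ] {Γ : Set E} [NormedField 𝕜] {g ψ : E → 𝕜} {C : ℝ≥0∞}

theorem tsum_setLIntegral_enorm_mul_lt_top (hg : StronglyMeasurable g)
    (hgC : ∀ y, ∑' ℓ : Λ, ‖g (y + ℓ)‖ₑ ≤ C) (hC : C ≠ ∞) (hψ : IntegrableOn ψ Γ μ) :
    ∑' ℓ : Λ, ∫⁻ y in Γ, ‖g (y + ℓ) * ψ y‖ₑ ∂μ < ∞ := by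
  have hmeas (ℓ : Λ) : AEMeasurable (fun y => ‖g (y + ℓ) * ψ y‖ₑ) (μ.restrict Γ) :=
    ((hg.comp_measurable (measurable_add_const (ℓ : E))).aestronglyMeasurable.mul
      hψ.aestronglyMeasurable).enorm
  calc ∑' ℓ : Λ, ∫⁻ y in Γ, ‖g (y + ℓ) * ψ y‖ₑ ∂μ
      = ∫⁻ y in Γ, (∑' ℓ : Λ, ‖g (y + ℓ)‖ₑ) * ‖ψ y‖ₑ ∂μ := by
        simp_rw [← lintegral_tsum hmeas, enorm_mul, ENNReal.tsum_mul_right]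
    _ ≤ ∫⁻ y in Γ, C * ‖ψ y‖ₑ ∂μ := by gcongr with y; exact hgC y
    _ = C * ∫⁻ y in Γ, ‖ψ y‖ₑ ∂μ := lintegral_const_mul' C _ hC
    _ < ∞ := ENNReal.mul_lt_top hC.lt_top hψ.2

variable [μ.IsAddLeftInvariant]

theorem MeasureTheory.IsAddFundamentalDomain.integrable_mul_of_periodic
    (hΓ : IsAddFundamentalDomain Λ Γ μ)
    (hg : StronglyMeasurable g) (hgC : ∀ y, ∑' ℓ : Λ, ‖g (y + ℓ)‖ₑ ≤ C) (hC : C ≠ ∞)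
    (hψ : AEStronglyMeasurable ψ μ) (hψper : ∀ y, ∀ ℓ ∈ Λ, ψ (y + ℓ) = ψ y)
    (hψΓ : IntegrableOn ψ Γ μ) :
    Integrable (fun y => g y * ψ y) μ := by
  refine ⟨hg.aestronglyMeasurable.mul hψ, ?_⟩
  rw [hasFiniteIntegral_iff_enorm, hΓ.lintegral_eq_tsum'']
  simpa only [AddSubgroup.apply_vadd_mul_apply_vadd hψper]
    using tsum_setLIntegral_enorm_mul_lt_top hg hgC hC hψΓ

theorem MeasureTheory.IsAddFundamentalDomain.integral_mul_eq_setIntegral_tsum_mul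
    [NormedSpace ℝ 𝕜] (hΓ : IsAddFundamentalDomain Λ Γ μ)
    (hg : StronglyMeasurable g) (hgC : ∀ y, ∑' ℓ : Λ, ‖g (y + ℓ)‖ₑ ≤ C) (hC : C ≠ ∞)
    (hψ : AEStronglyMeasurable ψ μ) (hψper : ∀ y, ∀ ℓ ∈ Λ, ψ (y + ℓ) = ψ y)
    (hψΓ : IntegrableOn ψ Γ μ) :
    ∫ y, g y * ψ y ∂μ = ∫ y in Γ, (∑' ℓ : Λ, g (y + ℓ)) * ψ y ∂μ := by
  have hmeas (ℓ : Λ) : AEStronglyMeasurable (fun y => g (y + ℓ) * ψ y) (μ.restrict Γ) :=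
    (hg.comp_measurable (measurable_add_const (ℓ : E))).aestronglyMeasurable.mul
      hψΓ.aestronglyMeasurable
  calc ∫ y, g y * ψ y ∂μ = ∑' ℓ : Λ, ∫ y in Γ, g (ℓ +ᵥ y) * ψ (ℓ +ᵥ y) ∂μ :=
        hΓ.integral_eq_tsum'' _ (hΓ.integrable_mul_of_periodic hg hgC hC hψ hψper hψΓ)
    _ = ∑' ℓ : Λ, ∫ y in Γ, g (y + ℓ) * ψ y ∂μ := by
        simp only [AddSubgroup.apply_vadd_mul_apply_vadd hψper]
    _ = ∫ y in Γ, ∑' ℓ : Λ, g (y + ℓ) * ψ y ∂μ :=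
        (integral_tsum hmeas (tsum_setLIntegral_enorm_mul_lt_top hg hgC hC hψΓ).ne).symm
    _ = ∫ y in Γ, (∑' ℓ : Λ, g (y + ℓ)) * ψ y ∂μ := by simp_rw [tsum_mul_right]

end Unfolding

section Lattice

variable {E : Type*} [NormedAddCommGroup E] [NormedSpace ℝ E] [FiniteDimensional ℝ E]
  (L : Submodule ℤ E) [DiscreteTopology L]

theorem ZLattice.summable_exp_neg_norm : Summable fun ℓ : L => Real.exp (-‖(ℓ : E)‖) := by
  set n := Module.finrank ℤ L + 1
  refine Summable.of_norm_bounded_eventually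
    ((ZLattice.summable_norm_pow_inv L n (Nat.lt_succ_self _)).mul_left (n.factorial : ℝ)) ?_
  filter_upwards [Set.Finite.compl_mem_cofinite (Set.finite_singleton (0 : L))] with ℓ hℓ
  have hpos : 0 < ‖ℓ‖ := norm_pos_iff.2 hℓ
  have h := Real.pow_div_factorial_le_exp _ hpos.le n
  rw [div_le_iff₀' (by positivity)] at h
  rw [Real.norm_of_nonneg (Real.exp_pos _).le, Real.exp_neg, inv_pow, ← div_eq_mul_inv,
    le_div_iff₀ (by positivity), ← div_eq_inv_mul, div_le_iff₀ (Real.exp_pos _),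
    Submodule.norm_coe]
  exact h

theorem ZLattice.summable_exp_neg_norm_add (v : E) :
    Summable fun ℓ : L => Real.exp (-‖(ℓ : E) + v‖) :=
  .of_nonneg_of_le (fun _ => (Real.exp_pos _).le) (fun _ => Real.exp_neg_norm_add_le _ v)
    ((ZLattice.summable_exp_neg_norm L).mul_left _)

theorem ZLattice.tsum_exp_neg_norm_add_le {R : ℝ} (hR : ∀ w : E, ∃ ℓ : L, ‖w + ℓ‖ ≤ R) (w : E) :
    ∑' ℓ : L, Real.exp (-‖(ℓ : E) + w‖) ≤ Real.exp R * ∑' ℓ : L, Real.exp (-‖(ℓ : E)‖) := by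
  obtain ⟨ℓ₀, hℓ₀⟩ := hR w
  calc ∑' ℓ : L, Real.exp (-‖(ℓ : E) + w‖)
      = ∑' ℓ : L, Real.exp (-‖((ℓ - ℓ₀ : L) : E) + (w + ℓ₀)‖) := by
        simp only [AddSubgroupClass.coe_sub, sub_add_add_cancel]
    _ = ∑' ℓ : L, Real.exp (-‖(ℓ : E) + (w + ℓ₀)‖) :=
        (Equiv.subRight ℓ₀).tsum_eq fun ℓ : L => Real.exp (-‖(ℓ : E) + (w + ℓ₀)‖)
    _ ≤ ∑' ℓ : L, Real.exp ‖w + ℓ₀‖ * Real.exp (-‖(ℓ : E)‖) :=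
        (ZLattice.summable_exp_neg_norm_add L _).tsum_le_tsum
          (fun ℓ => Real.exp_neg_norm_add_le _ _) ((ZLattice.summable_exp_neg_norm L).mul_left _)
    _ ≤ Real.exp R * ∑' ℓ : L, Real.exp (-‖(ℓ : E)‖) := by
        rw [tsum_mul_left]
        gcongr

end Lattice

theorem ZSpan.exists_forall_exists_norm_add_le {E ι : Type*} [NormedAddCommGroup E]
    [NormedSpace ℝ E] [Fintype ι] (b : Module.Basis ι ℝ E) :
    ∃ R : ℝ, ∀ w : E, ∃ ℓ : Submodule.span ℤ (Set.range b), ‖w + ℓ‖ ≤ R := by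
  obtain ⟨R, hR⟩ := isBounded_iff_forall_norm_le.1 (ZSpan.fundamentalDomain_isBounded b)
  refine ⟨R, fun w => ⟨-ZSpan.floor b w, ?_⟩⟩
  simpa [← sub_eq_add_neg, ← ZSpan.fract_apply]
    using hR _ (ZSpan.fract_mem_fundamentalDomain b w)

section CoherentState

variable {d : ℕ} {hbar : ℝ} (q p : EuclideanSpace ℝ (Fin d))

theorem continuous_coherentState : Continuous (coherentState d hbar q p) := by
  unfold coherentState
  fun_prop

theorem norm_coherentState (hhbar : 0 ≤ hbar) (y : EuclideanSpace ℝ (Fin d)) :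
    ‖coherentState d hbar q p y‖ =
      (Real.pi * hbar) ^ (-(d : ℝ) / 4) * Real.exp (-‖y - q‖ ^ 2 / (2 * hbar)) := by
  have hphase : (Complex.I * ((inner ℝ p y : ℝ) : ℂ) / (hbar : ℂ)).re = 0 := by
    simp [Complex.div_re]
  rw [coherentState, norm_mul, norm_mul, Complex.norm_exp, Complex.norm_exp, hphase,
    Complex.ofReal_re, Complex.norm_real, Real.norm_of_nonneg (by positivity), Real.exp_zero,
    mul_one]

theorem exists_tsum_enorm_coherentState_add_le (hhbar : 0 < hbar)
    (L : Submodule ℤ (EuclideanSpace ℝ (Fin d))) [DiscreteTopology L] {R : ℝ}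
    (hR : ∀ w : EuclideanSpace ℝ (Fin d), ∃ ℓ : L, ‖w + ℓ‖ ≤ R) :
    ∃ C : ℝ, ∀ y, ∑' ℓ : L, ‖coherentState d hbar q p (y + ℓ)‖ₑ ≤ ENNReal.ofReal C := by
  set K := (Real.pi * hbar) ^ (-(d : ℝ) / 4) * Real.exp (hbar / 2)
  refine ⟨K * (Real.exp R * ∑' ℓ : L, Real.exp (-‖(ℓ : EuclideanSpace ℝ (Fin d))‖)), fun y => ?_⟩
  have hle (ℓ : L) :
      ‖coherentState d hbar q p (y + ℓ)‖ ≤ K * Real.exp (-‖(ℓ : _) + (y - q)‖) := by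
    rw [norm_coherentState q p hhbar.le, mul_assoc,
      show (ℓ : EuclideanSpace ℝ (Fin d)) + (y - q) = y + ℓ - q by abel]
    gcongr
    exact Real.exp_neg_sq_div_le hhbar _
  calc ∑' ℓ : L, ‖coherentState d hbar q p (y + ℓ)‖ₑ
      = ∑' ℓ : L, ENNReal.ofReal ‖coherentState d hbar q p (y + ℓ)‖ := by
        simp only [ofReal_norm]
    _ ≤ ∑' ℓ : L, ENNReal.ofReal (K * Real.exp (-‖(ℓ : _) + (y - q)‖)) :=
        ENNReal.tsum_le_tsum fun ℓ => ENNReal.ofReal_le_ofReal (hle ℓ)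
    _ = ENNReal.ofReal (∑' ℓ : L, K * Real.exp (-‖(ℓ : _) + (y - q)‖)) :=
        (ENNReal.ofReal_tsum_of_nonneg (fun _ => by positivity)
          ((ZLattice.summable_exp_neg_norm_add L _).mul_left K)).symm
    _ ≤ _ := by
        rw [tsum_mul_left]
        gcongr
        exact ZLattice.tsum_exp_neg_norm_add_le L hR _

end CoherentState

theorem IsFullRankLattice.exists_basis_eq_span {d : ℕ} {L : Set (EuclideanSpace ℝ (Fin d))}
    (hL : IsFullRankLattice L) :
    ∃ a : Module.Basis (Fin d) ℝ (EuclideanSpace ℝ (Fin d)),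
      L = Submodule.span ℤ (Set.range a) := by
  obtain ⟨a, rfl⟩ := hL
  refine ⟨a, Set.ext fun z => ?_⟩
  simp [Submodule.mem_span_range_iff_exists_fun, Int.cast_smul_eq_zsmul, eq_comm]

theorem IsFundDomain.isAddFundamentalDomain {d : ℕ} {Λ : AddSubgroup (EuclideanSpace ℝ (Fin d))}
    {Γ : Set (EuclideanSpace ℝ (Fin d))} (h : IsFundDomain (Λ : Set _) Γ) :
    IsAddFundamentalDomain Λ Γ volume := by
  refine .of_ae_existsUnique h.1.nullMeasurableSet (h.2.mono fun x hx => ?_)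
  obtain ⟨ℓ, ⟨hℓ, hxℓ⟩, huniq⟩ := hx
  refine ⟨⟨-ℓ, neg_mem hℓ⟩, by simpa [AddSubgroup.vadd_def, neg_add_eq_sub] using hxℓ,
    fun g hg => Subtype.ext ?_⟩
  have hgℓ := huniq (-g)
    ⟨neg_mem g.2, by simpa [AddSubgroup.vadd_def, sub_eq_add_neg, add_comm] using hg⟩
  simp [← hgℓ]

/-- Unfolding identity: the full-space inner product `⟨q,p | ψ⟩_{L²(ℝ^d)}` equals the
unit-cell inner product of the `L`-periodized coherent state against `ψ`. -/
theorem coherent_state_unfolding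
    {d : ℕ} (hbar : ℝ) (hhbar : 0 < hbar)
    (L : Set (EuclideanSpace ℝ (Fin d))) (hL : IsFullRankLattice L)
    (Γ : Set (EuclideanSpace ℝ (Fin d))) (hΓ : IsFundDomain L Γ)
    (q p : EuclideanSpace ℝ (Fin d))
    (ψ : EuclideanSpace ℝ (Fin d) → ℂ) (hψmeas : Measurable ψ)
    (hψper : ∀ y : EuclideanSpace ℝ (Fin d), ∀ ℓ ∈ L, ψ (y + ℓ) = ψ y)
    (hψL1 : IntegrableOn ψ Γ volume) :
    Integrable (fun y : EuclideanSpace ℝ (Fin d) =>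
        (starRingEnd ℂ) (coherentState d hbar q p y) * ψ y) volume ∧
    ∫ y : EuclideanSpace ℝ (Fin d), (starRingEnd ℂ) (coherentState d hbar q p y) * ψ y
      = ∫ y in Γ,
          (starRingEnd ℂ)
            (∑' ℓ : L, coherentState d hbar q p (y + (ℓ : EuclideanSpace ℝ (Fin d)))) *
          ψ y := by
  obtain ⟨a, rfl⟩ := hL.exists_basis_eq_span
  set Λ := Submodule.span ℤ (Set.range a)
  have : Countable Λ.toAddSubgroup := inferInstanceAs (Countable Λ)
  have hΓΛ : IsAddFundamentalDomain Λ.toAddSubgroup Γ volume := hΓ.isAddFundamentalDomain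
  obtain ⟨R, hR⟩ := ZSpan.exists_forall_exists_norm_add_le a
  obtain ⟨C, hC⟩ := exists_tsum_enorm_coherentState_add_le q p hhbar Λ hR
  have hconj : StronglyMeasurable fun y => (starRingEnd ℂ) (coherentState d hbar q p y) :=
    (continuous_star.comp (continuous_coherentState q p)).stronglyMeasurable
  have hbound (y : EuclideanSpace ℝ (Fin d)) :
      ∑' ℓ : Λ.toAddSubgroup, ‖(starRingEnd ℂ) (coherentState d hbar q p (y + ℓ))‖ₑ ≤
        ENNReal.ofReal C := by
    simp only [RCLike.enorm_conj]
    exact hC y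
  refine ⟨hΓΛ.integrable_mul_of_periodic hconj hbound ENNReal.ofReal_ne_top
    hψmeas.aestronglyMeasurable hψper hψL1, ?_⟩
  rw [hΓΛ.integral_mul_eq_setIntegral_tsum_mul hconj hbound ENNReal.ofReal_ne_top
    hψmeas.aestronglyMeasurable hψper hψL1]
  simp_rw [Complex.conj_tsum]
  rfl
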